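/- arXiv:0808.3452 — 3 statements merged into one kernel-verified Lean document; each statement's English description precedes it below -/
import Mathlib

section
/- For all natural numbers n, m, k: ∑_{i=0}^{k} (m·i + n·(k−i) − 2·i·(k−i)) · C(n,i) · C(m,k−i) = 2·n·m·C(n+m−2, k−1). -/
open Finset

/-- Binomial coefficient on integers, vanishing unless `0 ≤ k ≤ n`. -/
def C (n k : ℤ) : ℤ := if 0 ≤ n ∧ 0 ≤ k then (n.toNat.choose k.toNat : ℤ) else 0

lemma lem1 (N j : ℕ) : ((N:ℤ) - j) * (N.choose j : ℤ) = N * ((N-1).choose j : ℤ) := by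
  rcases N with _ | N'
  · rcases j with _ | j <;> simp
  rcases le_or_gt j (N'+1) with h | h
  · have h1 := Nat.choose_mul_succ_eq N' j
    have h2 : ((N' + 1 - j : ℕ) : ℤ) = (N' : ℤ) + 1 - j := by
      push_cast [Nat.cast_sub h]; ring
    have h3 := congrArg (Nat.cast : ℕ → ℤ) h1
    push_cast [h2] at h3
    simp only [Nat.add_sub_cancel]
    push_cast
    linarith
  · rw [Nat.choose_eq_zero_of_lt h, Nat.choose_eq_zero_of_lt (by omega : N' + 1 - 1 < j)]
    simp

lemma lem2 (N j : ℕ) : ((j:ℤ) + 1) * (N.choose (j+1) : ℤ) = N * ((N-1).choose j : ℤ) := by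
  rcases N with _ | N'
  · simp
  simp only [Nat.add_sub_cancel]
  have h' : (j+1) * (N'+1).choose (j+1) = (N'+1) * N'.choose j := by
    simpa [Nat.succ_eq_add_one, mul_comm] using (Nat.add_one_mul_choose_eq N' j).symm
  exact_mod_cast congrArg (Nat.cast : ℕ → ℤ) h'

lemma vander (a b K : ℕ) :
    ∑ i ∈ range (K+1), (a.choose i) * (b.choose (K - i)) = (a+b).choose K := by
  rw [Nat.add_choose_eq]
  rw [Finset.Nat.sum_antidiagonal_eq_sum_range_succ_mk (fun ij => a.choose ij.1 * b.choose ij.2)]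

theorem stmt_0 (n m k : ℕ) :
    ∑ i ∈ range (k + 1),
      ((m : ℤ) * i + n * ((k : ℤ) - i) - 2 * i * ((k : ℤ) - i)) * C n i * C m ((k : ℤ) - i)
      = 2 * n * m * C ((n : ℤ) + m - 2) ((k : ℤ) - 1) := by
  -- Replace C by Nat.choose inside the sum
  have hrw : ∑ i ∈ range (k + 1),
      ((m : ℤ) * i + n * ((k : ℤ) - i) - 2 * i * ((k : ℤ) - i)) * C n i * C m ((k : ℤ) - i)
      = ∑ i ∈ range (k + 1),
      ((m : ℤ) * i + n * ((k : ℤ) - i) - 2 * i * ((k : ℤ) - i)) * (n.choose i : ℤ) * (m.choose (k - i) : ℤ) := by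
    refine Finset.sum_congr rfl fun i hi => ?_
    have hik : i ≤ k := by simpa [Nat.lt_succ_iff] using hi
    have h1 : C n i = (n.choose i : ℤ) := by simp [C]
    have h2 : ((k : ℤ) - i) = ((k - i : ℕ) : ℤ) := by
      push_cast [Nat.cast_sub hik]; ring
    have h3 : C m ((k : ℤ) - i) = (m.choose (k - i) : ℤ) := by
      rw [h2]; simp [C]
    rw [h1, h3]
  rw [hrw]
  -- Split each summand into two parts
  have hsplit : ∑ i ∈ range (k + 1),
      ((m : ℤ) * i + n * ((k : ℤ) - i) - 2 * i * ((k : ℤ) - i)) * (n.choose i : ℤ) * (m.choose (k - i) : ℤ)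
      = (∑ i ∈ range (k + 1),
          (i : ℤ) * (n.choose i : ℤ) * (((m : ℤ) - ((k - i : ℕ) : ℤ)) * (m.choose (k - i) : ℤ)))
      + (∑ i ∈ range (k + 1),
          (((n : ℤ) - i) * (n.choose i : ℤ)) * (((k - i : ℕ) : ℤ) * (m.choose (k - i) : ℤ))) := by
    rw [← Finset.sum_add_distrib]
    refine Finset.sum_congr rfl fun i hi => ?_
    have hik : i ≤ k := by simpa [Nat.lt_succ_iff] using hi
    have h2 : ((k : ℤ) - i) = ((k - i : ℕ) : ℤ) := by
      push_cast [Nat.cast_sub hik]; ring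
    rw [h2]; ring
  rw [hsplit]
  -- First sum
  have hA : ∑ i ∈ range (k + 1),
      (i : ℤ) * (n.choose i : ℤ) * (((m : ℤ) - ((k - i : ℕ) : ℤ)) * (m.choose (k - i) : ℤ))
      = ∑ j ∈ range k, ((n : ℤ) * ((n-1).choose j : ℤ)) * ((m : ℤ) * ((m-1).choose (k-1-j) : ℤ)) := by
    rw [Finset.sum_range_succ']
    simp only [Nat.cast_zero, zero_mul, mul_zero, add_zero]
    refine Finset.sum_congr rfl fun j hj => ?_
    have e1 : k - (j + 1) = k - 1 - j := by omega
    rw [e1]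
    have e2 := lem2 n j
    have e3 := lem1 m (k - 1 - j)
    push_cast
    linear_combination (((m : ℤ) - ((k-1-j : ℕ) : ℤ)) * ((m.choose (k-1-j) : ℕ) : ℤ)) * e2
      + ((n : ℤ) * (((n-1).choose j : ℕ) : ℤ)) * e3
  -- Second sum
  have hB : ∑ i ∈ range (k + 1),
      (((n : ℤ) - i) * (n.choose i : ℤ)) * (((k - i : ℕ) : ℤ) * (m.choose (k - i) : ℤ))
      = ∑ j ∈ range k, ((n : ℤ) * ((n-1).choose j : ℤ)) * ((m : ℤ) * ((m-1).choose (k-1-j) : ℤ)) := by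
    rw [Finset.sum_range_succ]
    simp only [Nat.sub_self, Nat.cast_zero, zero_mul, mul_zero, add_zero]
    refine Finset.sum_congr rfl fun j hj => ?_
    have hjk : j < k := Finset.mem_range.mp hj
    have e1 : k - j = (k - 1 - j) + 1 := by omega
    rw [e1]
    have e4 := lem1 n j
    have e5 := lem2 m (k-1-j)
    push_cast
    linear_combination ((((k-1-j : ℕ) : ℤ) + 1) * ((m.choose ((k-1-j)+1) : ℕ) : ℤ)) * e4
      + ((n : ℤ) * (((n-1).choose j : ℕ) : ℤ)) * e5
  rw [hA, hB]
  -- Conclude by cases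
  rcases k with _ | k'
  · simp [C]
  have hk1 : ((k' + 1 : ℕ) : ℤ) - 1 = (k' : ℤ) := by push_cast; ring
  rcases Nat.eq_zero_or_pos n with hn | hn
  · subst hn; simp
  rcases Nat.eq_zero_or_pos m with hm | hm
  · subst hm; simp
  obtain ⟨n₀, rfl⟩ := Nat.exists_eq_add_of_lt hn
  obtain ⟨m₀, rfl⟩ := Nat.exists_eq_add_of_lt hm
  simp only [Nat.zero_add, Nat.add_sub_cancel]
  have harg : ((n₀ + 1 : ℕ) : ℤ) + ((m₀ + 1 : ℕ) : ℤ) - 2 = ((n₀ + m₀ : ℕ) : ℤ) := by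
    push_cast; ring
  rw [harg, hk1]
  have hCval : C ((n₀ + m₀ : ℕ) : ℤ) ((k' : ℕ) : ℤ) = ((n₀+m₀).choose k' : ℤ) := by
    unfold C
    rw [if_pos ⟨Int.natCast_nonneg _, Int.natCast_nonneg _⟩, Int.toNat_natCast, Int.toNat_natCast]
  rw [hCval, ← two_mul, ← vander n₀ m₀ k']
  push_cast [Finset.mul_sum]
  refine Finset.sum_congr rfl fun j hj => ?_
  ring
end

section
/- For natural numbers r, α₁, t with r ≥ α₁ + t: ∑_{j=0}^{1} ∑_{i=0}^{r−α₁−t} C(r−i−t, j)·C(r−j, i)·C(r−1+j, r−α₁−t−i)·C(α₁+i, 1−j) = (α₁+r−t)·C(2r−1, r−α₁−t) + C(2r−2, r−α₁−t−1). -/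
open Finset

lemma C_cast (n k : ℕ) : C (n : ℤ) (k : ℤ) = (n.choose k : ℤ) := by
  simp [C]

lemma C_zero (n : ℤ) (h : 0 ≤ n) : C n 0 = 1 := by simp [C, h]

lemma C_one (n : ℤ) (h : 0 ≤ n) : C n 1 = n := by
  simp [C, h]

lemma C_neg {n k : ℤ} (h : k < 0) : C n k = 0 := by
  simp only [C, ite_eq_right_iff]
  intro hc
  omega

lemma vand (a b k : ℕ) : ∑ i ∈ range (k+1), a.choose i * b.choose (k-i) = (a+b).choose k := by
  rw [Nat.add_choose_eq, Finset.Nat.sum_antidiagonal_eq_sum_range_succ_mk]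

lemma key (a m r' : ℕ) :
    ∑ i ∈ range (m+2),
      ((a+i) * (r'+1).choose i * r'.choose (m+1-i)
        + (a + (m+1-i)) * r'.choose i * (r'+1).choose (m+1-i))
    = (2*a + m + 1) * (r'+1+r').choose (m+1) + (r'+r').choose m := by
  have hrefl : ∑ i ∈ range (m+2), (a + (m+1-i)) * r'.choose i * (r'+1).choose (m+1-i)
      = ∑ i ∈ range (m+2), (a+i) * (r'+1).choose i * r'.choose (m+1-i) := by
    rw [← Finset.sum_range_reflect]
    refine Finset.sum_congr rfl fun i hi => ?_
    simp only [mem_range] at hi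
    have h1 : m + 2 - 1 - i = m + 1 - i := by omega
    have h2 : m + 1 - (m + 1 - i) = i := by omega
    rw [h1, h2]; ring
  rw [Finset.sum_add_distrib, hrefl, ← two_mul]
  have hS : ∑ i ∈ range (m+2), (a+i) * (r'+1).choose i * r'.choose (m+1-i)
      = a * (r'+1+r').choose (m+1) + (r'+1) * (r'+r').choose m := by
    have split : ∀ i ∈ range (m+2), (a+i) * (r'+1).choose i * r'.choose (m+1-i)
        = a * ((r'+1).choose i * r'.choose (m+1-i)) + i * (r'+1).choose i * r'.choose (m+1-i) :=
      fun i _ => by ring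
    rw [Finset.sum_congr rfl split, Finset.sum_add_distrib, ← Finset.mul_sum,
      vand (r'+1) r' (m+1)]
    congr 1
    rw [Finset.sum_range_succ']
    simp only [Nat.zero_mul, zero_mul, add_zero]
    have step : ∀ i ∈ range (m+1), (i+1) * (r'+1).choose (i+1) * r'.choose (m+1-(i+1))
        = (r'+1) * (r'.choose i * r'.choose (m-i)) := by
      intro i _
      have h1 : m + 1 - (i+1) = m - i := by omega
      have h2 : (i+1) * (r'+1).choose (i+1) = (r'+1) * r'.choose i := by
        rw [mul_comm (i+1)]
        exact (Nat.add_one_mul_choose_eq r' i).symm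
      rw [h1, h2, mul_assoc]
    rw [Finset.sum_congr rfl step, ← Finset.mul_sum, vand r' r' m]
  rw [hS]
  have hV : ((m:ℤ)+1) * ((r'+1+r').choose (m+1) : ℕ) = ((r':ℤ)+r'+1) * ((r'+r').choose m : ℕ) := by
    have e : r'+1+r' = r'+r'+1 := by omega
    rw [e]
    have h' : ((r'+r'+1) * (r'+r').choose m : ℕ) = ((r'+r'+1).choose (m+1) * (m+1) : ℕ) :=
      Nat.add_one_mul_choose_eq (r'+r') m
    have h'' : ((r'+r'+1) * (r'+r').choose m : ℤ) = (((r'+r'+1).choose (m+1) : ℤ) * (m+1) : ℤ) := by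
      exact_mod_cast congrArg (Nat.cast : ℕ → ℤ) h'
    push_cast at h''
    linear_combination h''.symm
  zify
  linear_combination (-1 : ℤ) * hV

theorem stmt_7 (r α₁ t : ℕ) (hr : α₁ + t ≤ r) :
    ∑ j ∈ range 2, ∑ i ∈ range (r - α₁ - t + 1),
      C ((r : ℤ) - i - t) j * C ((r : ℤ) - j) i * C ((r : ℤ) - 1 + j) ((r : ℤ) - α₁ - t - i) *
        C ((α₁ : ℤ) + i) (1 - (j : ℤ))
    = ((α₁ : ℤ) + r - t) * C (2 * (r : ℤ) - 1) ((r : ℤ) - α₁ - t) +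
        C (2 * (r : ℤ) - 2) ((r : ℤ) - α₁ - t - 1) := by
  obtain ⟨m, rfl⟩ : ∃ m, r = α₁ + t + m := ⟨r - (α₁ + t), by omega⟩
  clear hr
  by_cases hR : α₁ + t + m = 0
  · obtain ⟨rfl, rfl, rfl⟩ : α₁ = 0 ∧ t = 0 ∧ m = 0 := by omega
    norm_num [C, Finset.sum_range_succ]
  · have hR1 : 1 ≤ α₁ + t + m := by omega
    have hrange : α₁ + t + m - α₁ - t = m := by omega
    rw [hrange, Finset.sum_range_succ, Finset.sum_range_succ, Finset.sum_range_zero, zero_add]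
    push_cast
    norm_num
    have hA : ∑ x ∈ range (m+1),
        C ((α₁:ℤ) + t + m - x - t) 0 * C ((α₁:ℤ) + t + m) x *
          C ((α₁:ℤ) + t + m - 1) ((α₁:ℤ) + t + m - α₁ - t - x) * C ((α₁:ℤ) + x) 1
        = ((∑ x ∈ range (m+1),
            (α₁ + x) * (α₁+t+m).choose x * (α₁+t+m-1).choose (m - x) : ℕ) : ℤ) := by
      rw [Nat.cast_sum]
      refine Finset.sum_congr rfl fun x hx => ?_
      simp only [mem_range] at hx
      have e1 : (α₁:ℤ) + t + m - x - t = ((α₁ + (m-x) : ℕ) : ℤ) := by omega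
      have e2 : (α₁:ℤ) + t + m = ((α₁+t+m : ℕ) : ℤ) := by push_cast; ring
      have e3 : (α₁:ℤ) + t + m - 1 = ((α₁+t+m-1 : ℕ) : ℤ) := by omega
      have e4 : (α₁:ℤ) + t + m - α₁ - t - x = ((m - x : ℕ) : ℤ) := by omega
      rw [e1, e3, e4, e2, C_cast, C_cast, C_zero _ (Int.natCast_nonneg _),
        C_one _ (by positivity)]
      push_cast
      ring
    have hB : ∑ x ∈ range (m+1),
        C ((α₁:ℤ) + t + m - x - t) 1 * C ((α₁:ℤ) + t + m - 1) x *
          C ((α₁:ℤ) + t + m) ((α₁:ℤ) + t + m - α₁ - t - x) * C ((α₁:ℤ) + x) 0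
        = ((∑ x ∈ range (m+1),
            (α₁ + (m-x)) * (α₁+t+m-1).choose x * (α₁+t+m).choose (m - x) : ℕ) : ℤ) := by
      rw [Nat.cast_sum]
      refine Finset.sum_congr rfl fun x hx => ?_
      simp only [mem_range] at hx
      have e1 : (α₁:ℤ) + t + m - x - t = ((α₁ + (m-x) : ℕ) : ℤ) := by omega
      have e2 : (α₁:ℤ) + t + m = ((α₁+t+m : ℕ) : ℤ) := by push_cast; ring
      have e3 : (α₁:ℤ) + t + m - 1 = ((α₁+t+m-1 : ℕ) : ℤ) := by omega
      have e4 : (α₁:ℤ) + t + m - α₁ - t - x = ((m - x : ℕ) : ℤ) := by omega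
      rw [e1, e3, e4, C_cast, C_one _ (Int.natCast_nonneg _),
        C_zero _ (by positivity)]
      rw [e2, C_cast]
      push_cast
      ring
    rw [hA, hB]
    have e5 : (α₁:ℤ) + ((α₁:ℤ) + t + m) - t = ((2*α₁ + m : ℕ) : ℤ) := by push_cast; ring
    have e6 : 2 * ((α₁:ℤ) + t + m) - 1 = ((2*(α₁+t+m) - 1 : ℕ) : ℤ) := by omega
    have e7 : (α₁:ℤ) + t + m - α₁ - t = ((m : ℕ) : ℤ) := by omega
    have e8 : 2 * ((α₁:ℤ) + t + m) - 2 = ((2*(α₁+t+m) - 2 : ℕ) : ℤ) := by omega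
    rw [e5, e6, e7, e8, C_cast]
    rcases m with _ | m'
    · rw [C_neg (by norm_num)]
      simp [Finset.sum_range_one]
      ring
    · have e9 : ((m'+1 : ℕ) : ℤ) - 1 = ((m'+1-1 : ℕ) : ℤ) := by omega
      rw [e9, C_cast]
      have hNat : (∑ x ∈ range (m'+2),
            (α₁+x) * ((α₁+t+m')+1).choose x * (α₁+t+m').choose (m'+1-x))
          + (∑ x ∈ range (m'+2),
            (α₁+(m'+1-x)) * (α₁+t+m').choose x * ((α₁+t+m')+1).choose (m'+1-x))
          = (2*α₁+m'+1) * ((α₁+t+m')+1+(α₁+t+m')).choose (m'+1)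
            + ((α₁+t+m')+(α₁+t+m')).choose m' := by
        rw [← Finset.sum_add_distrib]
        exact key α₁ m' (α₁+t+m')
      have k2 : α₁+t+(m'+1)-1 = α₁+t+m' := by omega
      have k3 : 2*(α₁+t+(m'+1))-1 = (α₁+t+m')+1+(α₁+t+m') := by omega
      have k4 : 2*(α₁+t+(m'+1))-2 = (α₁+t+m')+(α₁+t+m') := by omega
      have k5 : m'+1-1 = m' := by omega
      have k1 : α₁+t+(m'+1) = (α₁+t+m')+1 := by omega
      have k6 : 2*α₁+(m'+1) = 2*α₁+m'+1 := by omega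
      rw [k2, k3, k4, k5, k1, k6]
      exact_mod_cast hNat
end

section
/- For nonnegative integers a, b, k and integers a₁, b₁, a₂, b₂ with a₁+a₂ = a−k, b₁+b₂ = b+2k, a₁,a₂,b₁,b₂ ≥ 0, and (a₁,b₁) ≠ (0,0), (a₁,b₁) ≠ (a−k, b+2k), and for k ≤ a: ∑_{i=0}^{k} C(b₁,i)·C(b₂,k−i)·φ₀(a₁+i, a₁+b₁−i) = C(b+2k, k)·φ₂₁(a₁,b₁) + C(b+2(k−1), k−1)·φ₂₂(a₁,b₁), where φ₀(a₁+i, a₁+b₁−i) = (2a₁+b₁)(2a₂+b₂)(a₁b₂+a₂b₁+2a₁a₂+b₂i+b₁(k−i)−2i(k−i))·C(4a+2b−4, 4a₁+2b₁−2) − (2a₁+b₁)²(a₁b₂+a₂b₁+2a₁a₂+b₂i+b₁(k−i)−2i(k−i))·C(4a+2b−4, 4a₁+2b₁−1), φ₂₁(a₁,b₁) = (2a₁+b₁)(2a₂+b₂)(a₁b₂+a₂b₁+2a₁a₂)·C(4a+2b−4, 4a₁+2b₁−2) − (2a₁+b₁)²(a₁b₂+a₂b₁+2a₁a₂)·C(4a+2b−4,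 4a₁+2b₁−1), and φ₂₂(a₁,b₁) = 2(2a₁+b₁)(2a₂+b₂)b₁b₂·C(4a+2b−4, 4a₁+2b₁−2) − 2(2a₁+b₁)²b₁b₂·C(4a+2b−4, 4a₁+2b₁−1). -/
open Finset

lemma C_cast_s10 (m i : ℕ) : C (m : ℤ) (i : ℤ) = (m.choose i : ℤ) := by
  simp [C]

lemma vander_s10 (m n k : ℕ) :
    ∑ i ∈ range (k + 1), ((m.choose i : ℤ) * (n.choose (k - i) : ℤ))
      = ((m + n).choose k : ℤ) := by
  have h := Nat.add_choose_eq m n k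
  rw [Finset.Nat.sum_antidiagonal_eq_sum_range_succ_mk] at h
  exact_mod_cast h.symm

lemma absorbZ (m i : ℕ) :
    ((i : ℤ) + 1) * ((m + 1).choose (i + 1) : ℤ) = ((m : ℤ) + 1) * (m.choose i : ℤ) := by
  have h := Nat.add_one_mul_choose_eq m i
  have h' : ((m + 1) * m.choose i : ℕ) = ((m + 1).choose (i + 1) * (i + 1) : ℕ) := h
  have := congrArg (fun x : ℕ => (x : ℤ)) h'
  push_cast at this
  linarith

lemma compZ (m j : ℕ) :
    ((m : ℤ) + 1 - j) * ((m + 1).choose j : ℤ) = ((m : ℤ) + 1) * (m.choose j : ℤ) := by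
  rcases le_or_gt j (m + 1) with h | h
  · have hn := Nat.choose_mul_succ_eq m j
    have := congrArg (fun x : ℕ => (x : ℤ)) hn
    push_cast [h] at this
    linarith
  · rw [Nat.choose_eq_zero_of_lt h, Nat.choose_eq_zero_of_lt (by omega)]
    push_cast; ring

lemma wvander (m n k : ℕ) :
    ∑ i ∈ range (k + 1),
      (((n : ℤ) * i + (m : ℤ) * ((k : ℤ) - i) - 2 * i * ((k : ℤ) - i))
        * (m.choose i : ℤ) * (n.choose (k - i) : ℤ))
    = 2 * m * n * C ((m : ℤ) + n - 2) ((k : ℤ) - 1) := by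
  rcases Nat.eq_zero_or_pos k with hk | hk
  · subst hk
    simp [C]
  rcases Nat.eq_zero_or_pos m with hm | hm
  · subst hm
    rw [Finset.sum_eq_zero, ]
    · simp
    intro i hi
    rcases Nat.eq_zero_or_pos i with h0 | h0
    · subst h0; push_cast; ring
    · rw [Nat.choose_eq_zero_of_lt h0]; push_cast; ring
  rcases Nat.eq_zero_or_pos n with hn | hn
  · subst hn
    rw [Finset.sum_eq_zero]
    · simp
    intro i hi
    simp only [mem_range] at hi
    rcases eq_or_lt_of_le (Nat.lt_succ_iff.mp hi) with h0 | h0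
    · subst h0; rw [Nat.sub_self]; push_cast; ring
    · rw [show Nat.choose 0 (k - i) = 0 from Nat.choose_eq_zero_of_lt (by omega)]; push_cast; ring
  obtain ⟨m', rfl⟩ : ∃ m', m = m' + 1 := ⟨m - 1, by omega⟩
  obtain ⟨n', rfl⟩ : ∃ n', n = n' + 1 := ⟨n - 1, by omega⟩
  obtain ⟨k', rfl⟩ : ∃ k', k = k' + 1 := ⟨k - 1, by omega⟩
  have hC : C ((m' + 1 : ℕ) + (n' + 1 : ℕ) - 2 : ℤ) (((k' + 1 : ℕ) : ℤ) - 1)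
      = ((m' + n').choose k' : ℤ) := by
    have h1 : ((m' + 1 : ℕ) : ℤ) + ((n' + 1 : ℕ) : ℤ) - 2 = ((m' + n' : ℕ) : ℤ) := by push_cast; ring
    have h2 : (((k' + 1 : ℕ) : ℤ)) - 1 = ((k' : ℕ) : ℤ) := by push_cast; ring
    rw [h1, h2, C_cast_s10]
  rw [hC]
  have claim : ∀ i ∈ range (k' + 1 + 1),
      (((n' + 1 : ℕ) : ℤ) * i + ((m' + 1 : ℕ) : ℤ) * (((k' + 1 : ℕ) : ℤ) - i)
          - 2 * i * (((k' + 1 : ℕ) : ℤ) - i))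
        * ((m' + 1).choose i : ℤ) * ((n' + 1).choose (k' + 1 - i) : ℤ)
      = (i : ℤ) * ((m' + 1).choose i : ℤ) * (((n' : ℤ) + 1) * (n'.choose (k' + 1 - i) : ℤ))
        + ((k' + 1 - i : ℕ) : ℤ) * ((n' + 1).choose (k' + 1 - i) : ℤ)
            * (((m' : ℤ) + 1) * (m'.choose i : ℤ)) := by
    intro i hi
    simp only [mem_range] at hi
    have hle : i ≤ k' + 1 := by omega
    have c1 := compZ n' (k' + 1 - i)
    have c2 := compZ m' i
    push_cast [hle] at c1 c2 ⊢
    linear_combination ((i : ℤ) * ((m' + 1).choose i : ℤ)) * c1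
      + (((k' : ℤ) + 1 - i) * ((n' + 1).choose (k' + 1 - i) : ℤ)) * c2
  rw [Finset.sum_congr rfl claim, Finset.sum_add_distrib]
  have hS1 : ∑ i ∈ range (k' + 1 + 1),
      ((i : ℤ) * ((m' + 1).choose i : ℤ) * (((n' : ℤ) + 1) * (n'.choose (k' + 1 - i) : ℤ)))
      = ((m' : ℤ) + 1) * ((n' : ℤ) + 1) * ((m' + n').choose k' : ℤ) := by
    rw [Finset.sum_range_succ']
    have e : ∀ i ∈ range (k' + 1),
        (((i + 1 : ℕ)) : ℤ) * ((m' + 1).choose (i + 1) : ℤ)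
            * (((n' : ℤ) + 1) * (n'.choose (k' + 1 - (i + 1)) : ℤ))
        = ((m' : ℤ) + 1) * ((n' : ℤ) + 1)
            * ((m'.choose i : ℤ) * (n'.choose (k' - i) : ℤ)) := by
      intro i hi
      have h1 := absorbZ m' i
      rw [Nat.succ_sub_succ]
      push_cast
      linear_combination (((n' : ℤ) + 1) * (n'.choose (k' - i) : ℤ)) * h1
    rw [Finset.sum_congr rfl e, ← Finset.mul_sum, vander_s10]
    push_cast
    ring
  have hS2 : ∑ i ∈ range (k' + 1 + 1),
      (((k' + 1 - i : ℕ) : ℤ) * ((n' + 1).choose (k' + 1 - i) : ℤ)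
          * (((m' : ℤ) + 1) * (m'.choose i : ℤ)))
      = ((m' : ℤ) + 1) * ((n' : ℤ) + 1) * ((m' + n').choose k' : ℤ) := by
    rw [Finset.sum_range_succ]
    have e : ∀ i ∈ range (k' + 1),
        ((k' + 1 - i : ℕ) : ℤ) * ((n' + 1).choose (k' + 1 - i) : ℤ)
            * (((m' : ℤ) + 1) * (m'.choose i : ℤ))
        = ((m' : ℤ) + 1) * ((n' : ℤ) + 1)
            * ((m'.choose i : ℤ) * (n'.choose (k' - i) : ℤ)) := by
      intro i hi
      simp only [mem_range] at hi
      have hs : k' + 1 - i = (k' - i) + 1 := by omega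
      rw [hs]
      have h1 := absorbZ n' (k' - i)
      push_cast
      linear_combination (((m' : ℤ) + 1) * (m'.choose i : ℤ)) * h1
    rw [Finset.sum_congr rfl e, ← Finset.mul_sum, vander_s10, Nat.sub_self]
    push_cast
    ring
  rw [hS1, hS2]
  push_cast
  ring

theorem stmt_10 (a b k : ℕ) (hk : k ≤ a) (a₁ b₁ a₂ b₂ : ℤ)
    (ha₁ : 0 ≤ a₁) (ha₂ : 0 ≤ a₂) (hb₁ : 0 ≤ b₁) (hb₂ : 0 ≤ b₂)
    (hsa : a₁ + a₂ = (a : ℤ) - k) (hsb : b₁ + b₂ = (b : ℤ) + 2 * k)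
    (hne₀ : (a₁, b₁) ≠ (0, 0)) (hne₁ : (a₁, b₁) ≠ ((a : ℤ) - k, (b : ℤ) + 2 * k)) :
    ∑ i ∈ range (k + 1),
      C b₁ i * C b₂ ((k : ℤ) - i) *
        ((2 * a₁ + b₁) * (2 * a₂ + b₂) *
            (a₁ * b₂ + a₂ * b₁ + 2 * a₁ * a₂ + b₂ * i + b₁ * ((k : ℤ) - i)
              - 2 * i * ((k : ℤ) - i)) *
            C (4 * (a : ℤ) + 2 * b - 4) (4 * a₁ + 2 * b₁ - 2)
          - (2 * a₁ + b₁) ^ 2 *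
            (a₁ * b₂ + a₂ * b₁ + 2 * a₁ * a₂ + b₂ * i + b₁ * ((k : ℤ) - i)
              - 2 * i * ((k : ℤ) - i)) *
            C (4 * (a : ℤ) + 2 * b - 4) (4 * a₁ + 2 * b₁ - 1))
    = C ((b : ℤ) + 2 * k) k *
        ((2 * a₁ + b₁) * (2 * a₂ + b₂) * (a₁ * b₂ + a₂ * b₁ + 2 * a₁ * a₂) *
            C (4 * (a : ℤ) + 2 * b - 4) (4 * a₁ + 2 * b₁ - 2)
          - (2 * a₁ + b₁) ^ 2 * (a₁ * b₂ + a₂ * b₁ + 2 * a₁ * a₂) *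
            C (4 * (a : ℤ) + 2 * b - 4) (4 * a₁ + 2 * b₁ - 1))
      + C ((b : ℤ) + 2 * ((k : ℤ) - 1)) ((k : ℤ) - 1) *
        (2 * (2 * a₁ + b₁) * (2 * a₂ + b₂) * b₁ * b₂ *
            C (4 * (a : ℤ) + 2 * b - 4) (4 * a₁ + 2 * b₁ - 2)
          - 2 * (2 * a₁ + b₁) ^ 2 * b₁ * b₂ *
            C (4 * (a : ℤ) + 2 * b - 4) (4 * a₁ + 2 * b₁ - 1)) := by
  
  lift b₁ to ℕ using hb₁ with m
  lift b₂ to ℕ using hb₂ with n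
  set C2 : ℤ := C (4 * (a : ℤ) + 2 * b - 4) (4 * a₁ + 2 * m - 2) with hC2
  set C1 : ℤ := C (4 * (a : ℤ) + 2 * b - 4) (4 * a₁ + 2 * m - 1) with hC1
  have e : ∀ i ∈ range (k + 1),
      C (m : ℤ) i * C (n : ℤ) ((k : ℤ) - i) *
        ((2 * a₁ + m) * (2 * a₂ + n) *
            (a₁ * n + a₂ * m + 2 * a₁ * a₂ + n * i + m * ((k : ℤ) - i)
              - 2 * i * ((k : ℤ) - i)) * C2
          - (2 * a₁ + m) ^ 2 *
            (a₁ * n + a₂ * m + 2 * a₁ * a₂ + n * i + m * ((k : ℤ) - i)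
              - 2 * i * ((k : ℤ) - i)) * C1)
      = ((a₁ * n + a₂ * m + 2 * a₁ * a₂) * ((2 * a₁ + m) * (2 * a₂ + n) * C2
            - (2 * a₁ + m) ^ 2 * C1))
          * ((m.choose i : ℤ) * (n.choose (k - i) : ℤ))
        + ((2 * a₁ + m) * (2 * a₂ + n) * C2 - (2 * a₁ + m) ^ 2 * C1)
          * (((n : ℤ) * i + (m : ℤ) * ((k : ℤ) - i) - 2 * i * ((k : ℤ) - i))
              * (m.choose i : ℤ) * (n.choose (k - i) : ℤ)) := by
    intro i hi
    simp only [mem_range] at hi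
    have h2 : ((k : ℤ) - i) = ((k - i : ℕ) : ℤ) := by omega
    rw [h2, C_cast_s10, C_cast_s10]
    ring
  rw [Finset.sum_congr rfl e, Finset.sum_add_distrib, ← Finset.mul_sum, ← Finset.mul_sum,
    vander_s10, wvander]
  have h3 : (b : ℤ) + 2 * k = ((m + n : ℕ) : ℤ) := by push_cast; linarith
  have h4 : (b : ℤ) + 2 * ((k : ℤ) - 1) = (m : ℤ) + n - 2 := by push_cast at hsb ⊢; linarith
  rw [h3, C_cast_s10, h4]
  ring
end
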